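/- arXiv:2601.07817 — 3 statements merged into one kernel-verified Lean document; each statement's English description precedes it below -/
import Mathlib

section
/- Let Q(u, v) ∈ ℤ[u, v] be a quadratic form and let r be a positive integer. Then there exist N ≤ 2^{Ω(r)} rank-two sublattices Λ₁, …, Λ_N ⊆ ℤ² such that for all integers u, v: Q(u, v) ≡ 0 (mod r) if and only if (u, v) lies in Λ₁ ∪ ⋯ ∪ Λ_N. -/
/-!
Induct on the prime factors of `r`. Modulo a prime `p`, a binary quadratic form either vanishes
identically, or its zeros lie on at most two lines through the origin, or it vanishes only at the
origin. Correspondingly the solutions of `p ∣ Q x` lie in at most two sublattices `M ℤ²`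
(`ℤ²` itself, lattices of index `p`, or `p ℤ²`), on each of which `Q (M y) = p * Q' y` for another
integral binary form `Q'`. Inside `M ℤ²` the condition `p m ∣ Q x` then becomes `m ∣ Q' y`, so
each prime factor of `r` at most doubles the number of lattices.
-/

open Module Function

def binQuad {R : Type*} [CommRing R] (a b c : R) (x : R × R) : R :=
  a * x.1 ^ 2 + b * x.1 * x.2 + c * x.2 ^ 2

lemma binQuad_zero_right {R : Type*} [CommRing R] (a b : R) (x : R × R) :
    binQuad a b 0 x = x.1 * (a * x.1 + b * x.2) := by
  simp only [binQuad]; ring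

lemma intCast_binQuad {R : Type*} [CommRing R] (a b c : ℤ) (x : ℤ × ℤ) :
    ((binQuad a b c x : ℤ) : R) = binQuad (a : R) b c (Prod.map Int.cast Int.cast x) := by
  simp [binQuad]

lemma dvd_binQuad_iff (p : ℕ) (a b c : ℤ) (x : ℤ × ℤ) :
    (p : ℤ) ∣ binQuad a b c x ↔
      binQuad (a : ZMod p) b c (Prod.map Int.cast Int.cast x) = 0 := by
  rw [← ZMod.intCast_zmod_eq_zero_iff_dvd, intCast_binQuad]

section Field

variable {K : Type*} [Field K] {a b c : K}

lemma binQuad_eq_mul_of_root (hc : c ≠ 0) {ρ : K} (hρ : binQuad a b c (1, ρ) = 0) (x : K × K) :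
    binQuad a b c x = c * (x.2 - ρ * x.1) * (x.2 - (-ρ - b / c) * x.1) := by
  simp only [binQuad] at hρ ⊢
  field_simp
  linear_combination x.1 ^ 2 * hρ

lemma binQuad_eq_zero_of_forall_ne (hc : c ≠ 0) (hroot : ∀ ρ, binQuad a b c (1, ρ) ≠ 0)
    {x : K × K} (hx : binQuad a b c x = 0) : x = 0 := by
  obtain ⟨u, v⟩ := x
  have hu : u = 0 := by
    by_contra hu
    refine hroot (v / u) ?_
    have : binQuad a b c (u, v) = u ^ 2 * binQuad a b c (1, v / u) := by
      unfold binQuad; field_simp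
    simpa [hu, this] using hx
  simp_all [binQuad]

end Field

def IsUnionOfLattices (S : Set (ℤ × ℤ)) (n : ℕ) : Prop :=
  ∃ 𝓛 : Finset (Submodule ℤ (ℤ × ℤ)), 𝓛.card ≤ n ∧ (∀ Λ ∈ 𝓛, finrank ℤ Λ = 2) ∧
    S = ⋃ Λ ∈ 𝓛, (Λ : Set (ℤ × ℤ))

namespace IsUnionOfLattices

variable {S T : Set (ℤ × ℤ)} {m n : ℕ}

lemma univ : IsUnionOfLattices Set.univ 1 :=
  ⟨{⊤}, by simp, by simp [finrank_prod], by simp⟩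

open Classical in
lemma union (hS : IsUnionOfLattices S m) (hT : IsUnionOfLattices T n) :
    IsUnionOfLattices (S ∪ T) (m + n) := by
  obtain ⟨𝓛, hcard, hrank, rfl⟩ := hS
  obtain ⟨𝓛', hcard', hrank', rfl⟩ := hT
  refine ⟨𝓛 ∪ 𝓛', (Finset.card_union_le _ _).trans (by omega), ?_,
    (Finset.set_biUnion_union ..).symm⟩
  simp only [Finset.mem_union]
  rintro Λ (hΛ | hΛ)
  exacts [hrank Λ hΛ, hrank' Λ hΛ]

open Classical in
lemma image (f : ℤ × ℤ →ₗ[ℤ] ℤ × ℤ) (hf : Injective f) (hS : IsUnionOfLattices S n) :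
    IsUnionOfLattices (f '' S) n := by
  obtain ⟨𝓛, hcard, hrank, rfl⟩ := hS
  refine ⟨𝓛.image (Submodule.map f), Finset.card_image_le.trans hcard, ?_, ?_⟩
  · simp only [Finset.mem_image]
    rintro _ ⟨Λ, hΛ, rfl⟩
    rw [← (Submodule.equivMapOfInjective f hf Λ).finrank_eq, hrank Λ hΛ]
  · simp only [Set.image_iUnion₂, Finset.set_biUnion_finset_image, Submodule.map_coe]

end IsUnionOfLattices

lemma setOf_mul_dvd_inter_range {X Y R : Type*} [MonoidWithZero R] [IsLeftCancelMulZero R]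
    {Q : X → R} {Q' : Y → R} {M : Y → X} {p : R} (hp : p ≠ 0) (m : R)
    (hQ : ∀ y, Q (M y) = p * Q' y) :
    {x | p * m ∣ Q x} ∩ Set.range M = M '' {y | m ∣ Q' y} := by
  ext x
  constructor
  · rintro ⟨hx, y, rfl⟩
    exact ⟨y, by rwa [Set.mem_ofPred_eq, hQ, mul_dvd_mul_iff_left hp] at hx, rfl⟩
  · rintro ⟨y, hy, rfl⟩
    exact ⟨by rw [Set.mem_ofPred_eq, hQ]; exact mul_dvd_mul_left p hy, y, rfl⟩

def IsQuadDescent (p : ℕ) (a b c : ℤ) (M : ℤ × ℤ →ₗ[ℤ] ℤ × ℤ) : Prop :=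
  Injective M ∧ ∃ a' b' c' : ℤ, ∀ y, binQuad a b c (M y) = p * binQuad a' b' c' y

def HasQuadDescentCover (p : ℕ) (a b c : ℤ) : Prop :=
  ∃ M₁ M₂ : ℤ × ℤ →ₗ[ℤ] ℤ × ℤ, IsQuadDescent p a b c M₁ ∧ IsQuadDescent p a b c M₂ ∧
    ∀ x, (p : ℤ) ∣ binQuad a b c x → x ∈ Set.range M₁ ∪ Set.range M₂

lemma IsUnionOfLattices.setOf_mul_dvd {p m n : ℕ} (hp : p ≠ 0)
    (ih : ∀ a b c : ℤ, IsUnionOfLattices {y | (m : ℤ) ∣ binQuad a b c y} n) {a b c : ℤ}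
    (hcover : HasQuadDescentCover p a b c) :
    IsUnionOfLattices {x | (p : ℤ) * m ∣ binQuad a b c x} (n + n) := by
  obtain ⟨M₁, M₂, ⟨hinj₁, a₁, b₁, c₁, hQ₁⟩, ⟨hinj₂, a₂, b₂, c₂, hQ₂⟩, hcover⟩ := hcover
  have hp' : (p : ℤ) ≠ 0 := by exact_mod_cast hp
  have hsplit : {x | (p : ℤ) * m ∣ binQuad a b c x} =
      {x | (p : ℤ) * m ∣ binQuad a b c x} ∩ (Set.range M₁ ∪ Set.range M₂) :=
    (Set.inter_eq_left.2 fun x hx => hcover x (dvd_trans (dvd_mul_right _ _) hx)).symm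
  rw [hsplit, Set.inter_union_distrib_left, setOf_mul_dvd_inter_range hp' _ hQ₁,
    setOf_mul_dvd_inter_range hp' _ hQ₂]
  exact ((ih a₁ b₁ c₁).image M₁ hinj₁).union ((ih a₂ b₂ c₂).image M₂ hinj₂)

section Descent

variable {p : ℕ} {a b c : ℤ}

def slopeMap (p : ℕ) (l : ℤ) : ℤ × ℤ →ₗ[ℤ] ℤ × ℤ :=
  (LinearMap.fst ℤ ℤ ℤ).prod (l • LinearMap.fst ℤ ℤ ℤ + (p : ℤ) • LinearMap.snd ℤ ℤ ℤ)

def verticalMap (p : ℕ) : ℤ × ℤ →ₗ[ℤ] ℤ × ℤ :=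
  ((p : ℤ) • LinearMap.id).prodMap LinearMap.id

@[simp]
lemma slopeMap_apply (l : ℤ) (y : ℤ × ℤ) : slopeMap p l y = (y.1, l * y.1 + p * y.2) := rfl

@[simp]
lemma verticalMap_apply (y : ℤ × ℤ) : verticalMap p y = (p * y.1, y.2) := rfl

lemma mem_range_slopeMap_iff {l : ℤ} {x : ℤ × ℤ} :
    x ∈ Set.range (slopeMap p l) ↔ (x.2 : ZMod p) = l * x.1 := by
  rw [eq_comm, ← Int.cast_mul, ZMod.intCast_eq_intCast_iff_dvd_sub]
  constructor
  · rintro ⟨y, rfl⟩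
    exact ⟨y.2, by simp⟩
  · rintro ⟨t, ht⟩
    exact ⟨(x.1, t), by ext <;> simp; linarith⟩

lemma mem_range_verticalMap_iff {x : ℤ × ℤ} :
    x ∈ Set.range (verticalMap p) ↔ (x.1 : ZMod p) = 0 := by
  rw [ZMod.intCast_zmod_eq_zero_iff_dvd]
  constructor
  · rintro ⟨y, rfl⟩
    exact ⟨y.1, rfl⟩
  · rintro ⟨s, hs⟩
    exact ⟨(s, x.2), by ext <;> simp [hs]⟩

lemma mem_range_smul_id_iff {x : ℤ × ℤ} :
    x ∈ Set.range ((p : ℤ) • LinearMap.id : ℤ × ℤ →ₗ[ℤ] ℤ × ℤ) ↔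
      Prod.map Int.cast Int.cast x = (0 : ZMod p × ZMod p) := by
  simp only [Prod.ext_iff, Prod.map_fst, Prod.map_snd, Prod.fst_zero, Prod.snd_zero,
    ZMod.intCast_zmod_eq_zero_iff_dvd]
  constructor
  · rintro ⟨y, rfl⟩
    exact ⟨⟨y.1, rfl⟩, ⟨y.2, rfl⟩⟩
  · rintro ⟨⟨s, hs⟩, ⟨t, ht⟩⟩
    exact ⟨(s, t), by ext <;> simp [hs, ht]⟩

lemma isQuadDescent_id (ha : (p : ℤ) ∣ a) (hb : (p : ℤ) ∣ b) (hc : (p : ℤ) ∣ c) :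
    IsQuadDescent p a b c LinearMap.id := by
  obtain ⟨a', rfl⟩ := ha
  obtain ⟨b', rfl⟩ := hb
  obtain ⟨c', rfl⟩ := hc
  exact ⟨injective_id, a', b', c', fun y => by simp only [binQuad, LinearMap.id_apply]; ring⟩

lemma isQuadDescent_smul_id (hp : p ≠ 0) (a b c : ℤ) :
    IsQuadDescent p a b c ((p : ℤ) • LinearMap.id) :=
  ⟨smul_right_injective _ (by exact_mod_cast hp), p * a, p * b, p * c,
    fun y => by simp only [binQuad, LinearMap.smul_apply, LinearMap.id_apply, Prod.smul_fst,
      Prod.smul_snd, smul_eq_mul]; ring⟩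

lemma isQuadDescent_verticalMap (hp : p ≠ 0) (hc : (p : ℤ) ∣ c) :
    IsQuadDescent p a b c (verticalMap p) := by
  have hp' : (p : ℤ) ≠ 0 := by exact_mod_cast hp
  obtain ⟨c', rfl⟩ := hc
  refine ⟨fun y z h => ?_, p * a, b, c', fun y => by simp only [binQuad, verticalMap_apply]; ring⟩
  simp only [verticalMap_apply, Prod.mk.injEq, mul_right_inj' hp'] at h
  exact Prod.ext h.1 h.2

lemma isQuadDescent_slopeMap (hp : p ≠ 0) {l : ℤ} (hl : (p : ℤ) ∣ binQuad a b c (1, l)) :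
    IsQuadDescent p a b c (slopeMap p l) := by
  have hp' : (p : ℤ) ≠ 0 := by exact_mod_cast hp
  obtain ⟨A, hA⟩ := hl
  simp only [binQuad] at hA
  refine ⟨fun y z h => ?_, A, b + 2 * c * l, c * p, fun y => ?_⟩
  · simp only [slopeMap_apply, Prod.mk.injEq] at h
    exact Prod.ext h.1 (by simpa [h.1, mul_right_inj' hp'] using h.2)
  · simp only [binQuad, slopeMap_apply]
    linear_combination y.1 ^ 2 * hA

end Descent

section Cover

variable {p : ℕ} {a b c : ℤ}

lemma hasQuadDescentCover_of_dvd (ha : (p : ℤ) ∣ a) (hb : (p : ℤ) ∣ b) (hc : (p : ℤ) ∣ c) :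
    HasQuadDescentCover p a b c :=
  ⟨_, _, isQuadDescent_id ha hb hc, isQuadDescent_id ha hb hc,
    fun x _ => Or.inl (Set.mem_range_self (f := LinearMap.id) x)⟩

variable [Fact p.Prime]

lemma hasQuadDescentCover_of_b_c_eq_zero (ha : (a : ZMod p) ≠ 0) (hb : (b : ZMod p) = 0)
    (hc : (c : ZMod p) = 0) : HasQuadDescentCover p a b c := by
  have hvert := isQuadDescent_verticalMap (a := a) (b := b) (NeZero.ne p)
    ((ZMod.intCast_zmod_eq_zero_iff_dvd c p).1 hc)
  refine ⟨_, _, hvert, hvert, fun x hx => Or.inl (mem_range_verticalMap_iff.2 ?_)⟩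
  rw [dvd_binQuad_iff, hb, hc, binQuad_zero_right] at hx
  simpa [ha] using hx

lemma hasQuadDescentCover_of_c_eq_zero (hb : (b : ZMod p) ≠ 0) (hc : (c : ZMod p) = 0) :
    HasQuadDescentCover p a b c := by
  obtain ⟨l, hl⟩ := ZMod.intCast_surjective (-a / b : ZMod p)
  have hroot : (p : ℤ) ∣ binQuad a b c (1, l) := by
    rw [dvd_binQuad_iff, hc, binQuad_zero_right]
    simp [hl, mul_div_cancel₀ _ hb]
  refine ⟨_, _, isQuadDescent_verticalMap (NeZero.ne p)
    ((ZMod.intCast_zmod_eq_zero_iff_dvd c p).1 hc), isQuadDescent_slopeMap (NeZero.ne p) hroot,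
    fun x hx => ?_⟩
  rw [dvd_binQuad_iff, hc, binQuad_zero_right] at hx
  rw [Set.mem_union, mem_range_verticalMap_iff, mem_range_slopeMap_iff, hl]
  refine (mul_eq_zero.1 hx).imp id fun h => ?_
  field_simp
  simp only [Prod.map_fst, Prod.map_snd] at h
  linear_combination h

lemma hasQuadDescentCover_of_root (hc : (c : ZMod p) ≠ 0) {ρ : ZMod p}
    (hρ : binQuad (a : ZMod p) b c (1, ρ) = 0) : HasQuadDescentCover p a b c := by
  obtain ⟨l₁, hl₁⟩ := ZMod.intCast_surjective ρ
  obtain ⟨l₂, hl₂⟩ := ZMod.intCast_surjective (-ρ - b / c : ZMod p)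
  have hfactor := binQuad_eq_mul_of_root hc hρ
  have hroot₁ : (p : ℤ) ∣ binQuad a b c (1, l₁) := by
    rw [dvd_binQuad_iff]; simpa [hl₁] using hρ
  have hroot₂ : (p : ℤ) ∣ binQuad a b c (1, l₂) := by
    rw [dvd_binQuad_iff, hfactor]; simp [hl₂]
  refine ⟨_, _, isQuadDescent_slopeMap (NeZero.ne p) hroot₁,
    isQuadDescent_slopeMap (NeZero.ne p) hroot₂, fun x hx => ?_⟩
  rw [dvd_binQuad_iff, hfactor] at hx
  rw [Set.mem_union, mem_range_slopeMap_iff, mem_range_slopeMap_iff, hl₁, hl₂]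
  simpa [hc, sub_eq_zero] using hx

lemma hasQuadDescentCover_of_forall_ne (hc : (c : ZMod p) ≠ 0)
    (hroot : ∀ ρ : ZMod p, binQuad (a : ZMod p) b c (1, ρ) ≠ 0) :
    HasQuadDescentCover p a b c :=
  ⟨_, _, isQuadDescent_smul_id (NeZero.ne p) a b c, isQuadDescent_smul_id (NeZero.ne p) a b c,
    fun x hx => Or.inl (mem_range_smul_id_iff.2
      (binQuad_eq_zero_of_forall_ne hc hroot ((dvd_binQuad_iff p a b c x).1 hx)))⟩

lemma hasQuadDescentCover (p : ℕ) [Fact p.Prime] (a b c : ℤ) : HasQuadDescentCover p a b c := by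
  by_cases hc : (c : ZMod p) = 0
  · by_cases hb : (b : ZMod p) = 0
    · by_cases ha : (a : ZMod p) = 0
      · simp only [ZMod.intCast_zmod_eq_zero_iff_dvd] at ha hb hc
        exact hasQuadDescentCover_of_dvd ha hb hc
      · exact hasQuadDescentCover_of_b_c_eq_zero ha hb hc
    · exact hasQuadDescentCover_of_c_eq_zero hb hc
  · by_cases hroot : ∃ ρ : ZMod p, binQuad (a : ZMod p) b c (1, ρ) = 0
    · exact hasQuadDescentCover_of_root hc hroot.choose_spec
    · exact hasQuadDescentCover_of_forall_ne hc (not_exists.1 hroot)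

end Cover

open ArithmeticFunction ArithmeticFunction.Omega in
lemma isUnionOfLattices_setOf_dvd_binQuad {r : ℕ} (hr : r ≠ 0) (a b c : ℤ) :
    IsUnionOfLattices {x | (r : ℤ) ∣ binQuad a b c x} (2 ^ Ω r) := by
  induction r using induction_on_primes generalizing a b c with
  | zero => exact absurd rfl hr
  | one => simpa using IsUnionOfLattices.univ
  | prime_mul p m hp ih =>
    have : Fact p.Prime := ⟨hp⟩
    have hm : m ≠ 0 := right_ne_zero_of_mul hr
    rw [cardFactors_mul hp.ne_zero hm, cardFactors_apply_prime hp, pow_add, pow_one, two_mul,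
      Nat.cast_mul]
    exact IsUnionOfLattices.setOf_mul_dvd hp.ne_zero (ih hm) (hasQuadDescentCover p a b c)

/-- Let `Q(u, v) = α u² + β u v + γ v²` be an integral quadratic form and `r` a positive
integer. Then there are `N ≤ 2^{Ω(r)}` rank-two sublattices `Λ₁, …, Λ_N ⊆ ℤ²` such that
`Q(u, v) ≡ 0 (mod r)` if and only if `(u, v)` lies in their union. Here `Ω(r)` is the number
of prime factors of `r` counted with multiplicity. -/
theorem quadratic_congruence_lattices (α β γ : ℤ) (r : ℕ) (hr : 0 < r) :
    ∃ N : ℕ, N ≤ 2 ^ r.primeFactorsList.length ∧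
      ∃ Λ : Fin N → Submodule ℤ (ℤ × ℤ),
        (∀ i, Module.finrank ℤ (Λ i) = 2) ∧
        ∀ u v : ℤ,
          (r : ℤ) ∣ α * u ^ 2 + β * u * v + γ * v ^ 2 ↔ ∃ i, (u, v) ∈ Λ i := by
  obtain ⟨𝓛, hcard, hrank, hS⟩ := isUnionOfLattices_setOf_dvd_binQuad hr.ne' α β γ
  refine ⟨𝓛.card, by rwa [← ArithmeticFunction.cardFactors_apply],
    fun i => 𝓛.equivFin.symm i, fun i => hrank _ (𝓛.equivFin.symm i).2, fun u v => ?_⟩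
  have hmem : (r : ℤ) ∣ α * u ^ 2 + β * u * v + γ * v ^ 2 ↔ ∃ Λ ∈ 𝓛, (u, v) ∈ Λ := by
    simpa [binQuad] using Set.ext_iff.1 hS (u, v)
  rw [hmem]
  constructor
  · rintro ⟨Λ, hΛ, hx⟩
    exact ⟨𝓛.equivFin ⟨Λ, hΛ⟩, by simpa using hx⟩
  · rintro ⟨i, hx⟩
    exact ⟨_, (𝓛.equivFin.symm i).2, hx⟩
end

section
/- Let k ≥ 2 and let 𝖬 ⊂ ℝ^k be a lattice of full rank k, with dual lattice 𝖬̂ = { u ∈ ℝ^k : uᵀm ∈ ℤ for all m ∈ 𝖬 }. There is a constant C(k), depending only on k, and a finite set H ⊂ 𝖬 with #H ≤ C(k)(1 + det(𝖬)^{1/(k−1)}), such that ‖m‖_∞ ≤ C(k)(1 + det(𝖬)^{1/(k−1)}) for every m ∈ H, and every u ∈ 𝖬̂ with ‖u‖_∞ ≤ 1 satisfies uᵀm = 0 for some nonzero m ∈ H. -/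
/-!
Let `L = A ℤ^k` and let `S(T)` be its points of sup-norm at most `T`. Blichfeldt's principle,
counted with multiplicity, gives `T^k ≤ #S(T) · det L`, so at a radius `B ≍ 1 + det^{1/(k-1)}`
there are more than `2kB + 1` lattice points. Halving the radius must eventually leave only the
origin, which yields a scale `T ≤ B` with `#S(T) > 2kT + 1` but `#S(T/2) ≤ kT + 1`; covering the
cube of radius `2T` by `9^k` boxes of side `T/2` then bounds `#S(2T)`. Take `H = S(2T) \ {0}`:
for a dual vector `u` with `‖u‖∞ ≤ 1` the integers `uᵀm`, `m ∈ S(T)`, lie in `[-kT, kT]`, so two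
of them coincide and the difference of the two points lies in `H` and is orthogonal to `u`.
-/

open Finset Metric MeasureTheory Module ZLattice
open scoped ENNReal

namespace MeasureTheory.IsAddFundamentalDomain

variable {G α : Type*} [AddGroup G] [Countable G] [AddAction G α] [MeasurableSpace α]
  [MeasurableConstVAdd G α] {μ : Measure α} [VAddInvariantMeasure G α μ] {F s : Set α}

theorem measure_le_mul_of_card_le (hF : IsAddFundamentalDomain G F μ) (hs : MeasurableSet s)
    {N : ℕ} (hN : ∀ x (t : Finset G), (∀ g ∈ t, g +ᵥ x ∈ s) → #t ≤ N) :
    μ s ≤ N * μ F := by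
  have hcount : ∀ x, ∑' g : G, s.indicator 1 (g +ᵥ x) ≤ (N : ℝ≥0∞) := by
    refine fun x => tsum_le_of_sum_le' (by positivity) fun t => ?_
    classical
    simp only [Set.indicator_apply, Pi.one_apply, sum_boole]
    exact Nat.cast_le.mpr (hN x _ fun g hg => (mem_filter.mp hg).2)
  calc μ s = ∫⁻ y, s.indicator 1 y ∂μ := (lintegral_indicator_one hs).symm
    _ = ∑' g : G, ∫⁻ x in F, s.indicator 1 (g +ᵥ x) ∂μ := hF.lintegral_eq_tsum'' _
    _ = ∫⁻ x in F, ∑' g : G, s.indicator 1 (g +ᵥ x) ∂μ :=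
      (lintegral_tsum fun g =>
        ((measurable_one.indicator hs).comp (measurable_const_vadd g)).aemeasurable).symm
    _ ≤ ∫⁻ _ in F, (N : ℝ≥0∞) ∂μ := lintegral_mono hcount
    _ = N * μ F := setLIntegral_const F _

end MeasureTheory.IsAddFundamentalDomain

theorem norm_sub_le_of_floor_div_eq {ι : Type*} [Fintype ι] {x y : ι → ℝ} {r : ℝ} (hr : 0 < r)
    (h : ∀ i, ⌊x i / r⌋ = ⌊y i / r⌋) : ‖x - y‖ ≤ r := by
  refine (pi_norm_le_iff_of_nonneg hr.le).mpr fun i => ?_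
  have := Int.abs_sub_lt_one_of_floor_eq_floor (h i)
  rw [← sub_div, abs_div, abs_of_pos hr, div_lt_one hr] at this
  exact this.le

theorem abs_dotProduct_le_card_mul_norm_mul_norm {ι : Type*} [Fintype ι] (u m : ι → ℝ) :
    |u ⬝ᵥ m| ≤ Fintype.card ι * (‖u‖ * ‖m‖) := calc
  |u ⬝ᵥ m| ≤ ∑ i, |u i * m i| := abs_sum_le_sum_abs _ _
  _ ≤ ∑ _i : ι, ‖u‖ * ‖m‖ := sum_le_sum fun i _ => by
    rw [abs_mul]
    exact mul_le_mul (norm_le_pi_norm u i) (norm_le_pi_norm m i) (abs_nonneg _) (norm_nonneg _)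
  _ = Fintype.card ι * (‖u‖ * ‖m‖) := by rw [sum_const, card_univ, nsmul_eq_mul]

theorem Real.rpow_one_div_sub_one_pow {x : ℝ} (hx : 0 ≤ x) {n : ℕ} (hn : 1 < n) :
    (x ^ (1 / ((n : ℝ) - 1))) ^ (n - 1) = x := by
  have hn' : (1 : ℝ) < n := by exact_mod_cast hn
  rw [← Real.rpow_natCast, ← Real.rpow_mul hx, Nat.cast_sub hn.le, Nat.cast_one,
    one_div_mul_cancel (by linarith), Real.rpow_one]

theorem two_mul_mul_add_one_mul_pow_lt {n : ℕ} (hn : 2 ≤ n) {E : ℝ} (hE : 0 ≤ E) :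
    (2 * n * ((2 * n + 1) * (1 + E)) + 1) * E ^ (n - 1) < ((2 * n + 1) * (1 + E)) ^ n := by
  have hn' : (2 : ℝ) ≤ n := by exact_mod_cast hn
  have hlin : 2 * n * ((2 * n + 1) * (1 + E)) + 1 ≤ (2 * n + 1) ^ n * (1 + E) := calc
    2 * n * ((2 * n + 1) * (1 + E)) + 1 ≤ (2 * n + 1) ^ 2 * (1 + E) := by nlinarith
    _ ≤ (2 * n + 1) ^ n * (1 + E) := by gcongr; linarith
  calc (2 * n * ((2 * n + 1) * (1 + E)) + 1) * E ^ (n - 1)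
      < (2 * n * ((2 * n + 1) * (1 + E)) + 1) * (1 + E) ^ (n - 1) := by
        have : 0 < 2 * n * ((2 * n + 1) * (1 + E)) + 1 := by positivity
        gcongr
        · omega
        · linarith
    _ ≤ (2 * n + 1) ^ n * (1 + E) * (1 + E) ^ (n - 1) := by gcongr
    _ = ((2 * n + 1) * (1 + E)) ^ n := by
        rw [mul_assoc, ← pow_succ', Nat.sub_add_cancel (by omega), mul_pow]

def slicingConstant (n : ℕ) : ℝ := 9 ^ n * (n + 1) * (2 * n + 1)

namespace ZLattice

section Discrete

variable {E : Type*} [NormedAddCommGroup E] [ProperSpace E] (L : Submodule ℤ E) [DiscreteTopology L]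

theorem finite_closedBall_inter (T : ℝ) : (closedBall 0 T ∩ (L : Set E)).Finite :=
  finite_isBounded_inter_isClosed DiscreteTopology.isDiscrete isBounded_closedBall
    (L.coe_toAddSubgroup ▸ AddSubgroup.isClosed_of_discrete)

noncomputable def shortVectors (T : ℝ) : Finset E := (finite_closedBall_inter L T).toFinset

variable {L}

theorem mem_shortVectors {T : ℝ} {x : E} : x ∈ shortVectors L T ↔ x ∈ L ∧ ‖x‖ ≤ T := by
  simp [shortVectors, and_comm]

theorem card_le_card_shortVectors {s : Finset E} {r : ℝ}
    (hs : ∀ x ∈ s, ∀ y ∈ s, x - y ∈ L ∧ ‖x - y‖ ≤ r) : #s ≤ #(shortVectors L r) := by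
  obtain rfl | ⟨x₀, hx₀⟩ := s.eq_empty_or_nonempty
  · simp
  · exact card_le_card_of_injOn (· - x₀) (fun x hx => mem_shortVectors.mpr (hs x hx x₀ hx₀))
      fun x _ y _ h => sub_left_injective h

theorem card_le_card_shortVectors_of_vadd_mem_closedBall {x : E} {t : Finset L} {T : ℝ}
    (ht : ∀ g ∈ t, g +ᵥ x ∈ closedBall (0 : E) (T / 2)) : #t ≤ #(shortVectors L T) := by
  classical
  have hinj : Function.Injective fun g : L => (g : E) + x :=
    fun g h hgh => Subtype.ext (add_right_cancel hgh)
  rw [← card_image_of_injective t hinj]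
  refine card_le_card_shortVectors fun y hy z hz => ?_
  obtain ⟨g, hg, rfl⟩ := mem_image.mp hy
  obtain ⟨h, hh, rfl⟩ := mem_image.mp hz
  have hgx := mem_closedBall_zero_iff.mp (ht g hg)
  have hhx := mem_closedBall_zero_iff.mp (ht h hh)
  rw [Submodule.vadd_def, vadd_eq_add] at hgx hhx
  refine ⟨by simpa using L.sub_mem g.2 h.2, (norm_sub_le _ _).trans ?_⟩
  exact (add_le_add hgx hhx).trans_eq (add_halves T)

variable (L) in
theorem exists_card_shortVectors_le_one : ∃ ε > 0, ∀ T < ε, #(shortVectors L T) ≤ 1 := by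
  obtain ⟨ε, hε, hball⟩ := exists_ball_inter_eq_singleton_of_mem_discrete
    DiscreteTopology.isDiscrete L.zero_mem
  refine ⟨ε, hε, fun T hT => card_le_one.mpr fun x hx y hy => ?_⟩
  have hzero : ∀ z ∈ shortVectors L T, z = 0 := fun z hz => by
    obtain ⟨hzL, hzT⟩ := mem_shortVectors.mp hz
    have : z ∈ ball (0 : E) ε ∩ L := ⟨mem_ball_zero_iff.mpr (hzT.trans_lt hT), hzL⟩
    rwa [hball] at this
  rw [hzero x hx, hzero y hy]

theorem exists_scale_card_shortVectors {c T₀ : ℝ} (hc : 0 ≤ c) (hT₀ : 0 < T₀)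
    (h : c * T₀ + 1 < #(shortVectors L T₀)) :
    ∃ T, 0 < T ∧ T ≤ T₀ ∧ c * T + 1 < #(shortVectors L T) ∧
      #(shortVectors L (T / 2)) ≤ c * (T / 2) + 1 := by
  set P : ℕ → Prop := fun j => c * (T₀ / 2 ^ j) + 1 < #(shortVectors L (T₀ / 2 ^ j))
  have hfail : ∃ j, ¬ P j := by
    obtain ⟨ε, hε, hsmall⟩ := exists_card_shortVectors_le_one L
    obtain ⟨j, hj⟩ := exists_pow_lt_of_lt_one (div_pos hε hT₀) (one_half_lt_one (α := ℝ))
    refine ⟨j, not_lt.mpr ?_⟩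
    have hTj : T₀ / 2 ^ j < ε := calc
      T₀ / 2 ^ j = T₀ * (1 / 2) ^ j := by rw [one_div_pow, mul_one_div]
      _ < T₀ * (ε / T₀) := mul_lt_mul_of_pos_left hj hT₀
      _ = ε := mul_div_cancel₀ _ hT₀.ne'
    have hle : (#(shortVectors L (T₀ / 2 ^ j)) : ℝ) ≤ 1 := by exact_mod_cast hsmall _ hTj
    have : 0 ≤ c * (T₀ / 2 ^ j) := by positivity
    linarith
  obtain ⟨j, hj, hj1⟩ := Nat.exists_not_and_succ_of_not_zero_of_exists (p := fun j => ¬ P j)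
    (not_not.mpr (by simpa [P] using h)) hfail
  have hhalf : T₀ / 2 ^ (j + 1) = T₀ / 2 ^ j / 2 := by rw [pow_succ, div_div]
  refine ⟨T₀ / 2 ^ j, by positivity, div_le_self hT₀.le (one_le_pow₀ one_le_two), not_not.mp hj, ?_⟩
  simpa only [P, hhalf, not_lt] using hj1

end Discrete

section Pi

variable {ι : Type*} [Fintype ι] {L : Submodule ℤ (ι → ℝ)} [DiscreteTopology L]

theorem card_shortVectors_two_mul_le {T : ℝ} (hT : 0 < T) :
    #(shortVectors L (2 * T)) ≤ 9 ^ Fintype.card ι * #(shortVectors L (T / 2)) := by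
  classical
  have hT2 : 0 < T / 2 := by positivity
  set box : (ι → ℝ) → (ι → ℤ) := fun x i => ⌊x i / (T / 2)⌋
  have hfiber : ∀ b ∈ (shortVectors L (2 * T)).image box,
      #{x ∈ shortVectors L (2 * T) | box x = b} ≤ #(shortVectors L (T / 2)) := by
    refine fun b _ => card_le_card_shortVectors fun x hx y hy => ?_
    obtain ⟨hxS, hxb⟩ := mem_filter.mp hx
    obtain ⟨hyS, hyb⟩ := mem_filter.mp hy
    exact ⟨L.sub_mem (mem_shortVectors.mp hxS).1 (mem_shortVectors.mp hyS).1,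
      norm_sub_le_of_floor_div_eq hT2 (congrFun (hxb.trans hyb.symm))⟩
  have himage : (shortVectors L (2 * T)).image box ⊆ Icc (-4) 4 := by
    intro b hb
    obtain ⟨x, hx, rfl⟩ := mem_image.mp hb
    refine mem_Icc.mpr ⟨fun i => ?_, fun i => ?_⟩
    all_goals have hxi := abs_le.mp ((norm_le_pi_norm x i).trans (mem_shortVectors.mp hx).2)
    · show (-4 : ℤ) ≤ ⌊x i / (T / 2)⌋
      exact Int.le_floor.mpr (by rw [le_div_iff₀ hT2]; push_cast; linarith)
    · show ⌊x i / (T / 2)⌋ ≤ 4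
      exact Int.floor_le_iff.mpr (by rw [div_lt_iff₀ hT2]; push_cast; linarith)
  calc #(shortVectors L (2 * T))
      ≤ #(shortVectors L (T / 2)) * #((shortVectors L (2 * T)).image box) :=
        card_le_mul_card_image _ _ hfiber
    _ ≤ #(shortVectors L (T / 2)) * #(Icc (-4 : ι → ℤ) 4) := by gcongr
    _ = 9 ^ Fintype.card ι * #(shortVectors L (T / 2)) := by
        rw [Pi.card_Icc, mul_comm]
        simp

theorem pow_le_card_shortVectors_mul_covolume [IsZLattice ℝ L] {T : ℝ} (hT : 0 ≤ T) :
    T ^ Fintype.card ι ≤ #(shortVectors L T) * covolume L := by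
  let b := (Free.chooseBasis ℤ L).ofZLatticeBasis ℝ L
  have hF := ZLattice.isAddFundamentalDomain (Free.chooseBasis ℤ L) volume
  -- Mathlib provides this instance only for `L.toAddSubgroup`.
  have : VAddInvariantMeasure L (ι → ℝ) volume :=
    (inferInstance : VAddInvariantMeasure L.toAddSubgroup (ι → ℝ) volume)
  have hball := hF.measure_le_mul_of_card_le measurableSet_closedBall
    fun _ _ => card_le_card_shortVectors_of_vadd_mem_closedBall (T := T)
  rw [Real.volume_pi_closedBall _ (by positivity), mul_div_cancel₀ _ two_ne_zero] at hball
  have hfin : volume (ZSpan.fundamentalDomain b) ≠ ∞ :=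
    (ZSpan.fundamentalDomain_isBounded b).measure_lt_top.ne
  rw [covolume_eq_measure_fundamentalDomain L volume hF, measureReal_def]
  calc T ^ Fintype.card ι = (ENNReal.ofReal (T ^ Fintype.card ι)).toReal :=
        (ENNReal.toReal_ofReal (by positivity)).symm
    _ ≤ (#(shortVectors L T) * volume (ZSpan.fundamentalDomain b)).toReal :=
        ENNReal.toReal_mono (ENNReal.mul_ne_top (ENNReal.natCast_ne_top _) hfin) hball
    _ = #(shortVectors L T) * (volume (ZSpan.fundamentalDomain b)).toReal := by
        rw [ENNReal.toReal_mul, ENNReal.toReal_natCast]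

theorem exists_mem_shortVectors_two_mul_dotProduct_eq_zero {u : ι → ℝ}
    (hu : ∀ m ∈ L, ∃ z : ℤ, u ⬝ᵥ m = z) (hu1 : ‖u‖ ≤ 1) {T : ℝ} (hT : 0 ≤ T)
    (hcard : 2 * Fintype.card ι * T + 1 < #(shortVectors L T)) :
    ∃ m ∈ shortVectors L (2 * T), m ≠ 0 ∧ u ⬝ᵥ m = 0 := by
  set M := ⌊Fintype.card ι * T⌋
  have hM : 0 ≤ M := Int.floor_nonneg.mpr (by positivity)
  have hround : ∀ m ∈ shortVectors L T, u ⬝ᵥ m = round (u ⬝ᵥ m) := fun m hm => by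
    obtain ⟨z, hz⟩ := hu m (mem_shortVectors.mp hm).1
    rw [hz, round_intCast]
  have hmaps : ∀ m ∈ shortVectors L T, round (u ⬝ᵥ m) ∈ Icc (-M) M := fun m hm => by
    have hbound : |(round (u ⬝ᵥ m) : ℝ)| ≤ Fintype.card ι * T := by
      rw [← hround m hm]
      refine (abs_dotProduct_le_card_mul_norm_mul_norm u m).trans ?_
      gcongr
      exact (mul_le_mul hu1 (mem_shortVectors.mp hm).2 (norm_nonneg _) zero_le_one).trans_eq
        (one_mul T)
    obtain ⟨hlo, hhi⟩ := abs_le.mp hbound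
    have hneg : -round (u ⬝ᵥ m) ≤ M := Int.le_floor.mpr (by push_cast; linarith)
    exact mem_Icc.mpr ⟨by omega, Int.le_floor.mpr hhi⟩
  have hlt : #(Icc (-M) M) < #(shortVectors L T) := by
    have hIcc : (#(Icc (-M) M) : ℝ) = 2 * M + 1 := by
      rw [Int.card_Icc, ← Int.cast_natCast, Int.toNat_of_nonneg (by omega)]
      push_cast
      ring
    have := Int.floor_le ((Fintype.card ι : ℝ) * T)
    exact_mod_cast (hIcc.trans_le (by linarith)).trans_lt hcard
  obtain ⟨m, hm, m', hm', hne, heq⟩ := exists_ne_map_eq_of_card_lt_of_maps_to hlt hmaps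
  obtain ⟨hmL, hmT⟩ := mem_shortVectors.mp hm
  obtain ⟨hm'L, hm'T⟩ := mem_shortVectors.mp hm'
  refine ⟨m - m', mem_shortVectors.mpr ⟨L.sub_mem hmL hm'L, (norm_sub_le _ _).trans ?_⟩,
    sub_ne_zero.mpr hne, ?_⟩
  · linarith
  · rw [dotProduct_sub, sub_eq_zero, hround m hm, hround m' hm', heq]

theorem exists_finset_forall_dotProduct_eq_zero [IsZLattice ℝ L] (hn : 2 ≤ Fintype.card ι) :
    ∃ H : Finset (ι → ℝ),
      (∀ m ∈ H, m ∈ L ∧ m ≠ 0 ∧ ‖m‖ ≤ slicingConstant (Fintype.card ι) *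
        (1 + covolume L ^ (1 / ((Fintype.card ι : ℝ) - 1)))) ∧
      #H ≤ slicingConstant (Fintype.card ι) *
        (1 + covolume L ^ (1 / ((Fintype.card ι : ℝ) - 1))) ∧
      ∀ u : ι → ℝ, (∀ m ∈ L, ∃ z : ℤ, u ⬝ᵥ m = z) → ‖u‖ ≤ 1 → ∃ m ∈ H, u ⬝ᵥ m = 0 := by
  set n := Fintype.card ι
  have hn' : (2 : ℝ) ≤ n := by exact_mod_cast hn
  have hcov_pos := covolume_pos L volume
  set E := covolume L ^ (1 / ((n : ℝ) - 1))
  have hE : 0 ≤ E := by positivity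
  have hcov : covolume L = E ^ (n - 1) := (Real.rpow_one_div_sub_one_pow hcov_pos.le hn).symm
  set B := (2 * n + 1) * (1 + E)
  have hB : 1 ≤ B := one_le_mul_of_one_le_of_one_le (by linarith) (by linarith)
  have hbase : 2 * n * B + 1 < #(shortVectors L B) := by
    have hcount := pow_le_card_shortVectors_mul_covolume (L := L) (zero_le_one.trans hB)
    have hineq := two_mul_mul_add_one_mul_pow_lt hn hE
    rw [← hcov] at hineq
    exact lt_of_mul_lt_mul_right (hineq.trans_le hcount) hcov_pos.le
  obtain ⟨T, hT, hTB, hcardT, hcardT2⟩ :=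
    exists_scale_card_shortVectors (by positivity) (by positivity) hbase
  have hC : slicingConstant n * (1 + E) = 9 ^ n * (n + 1) * B := by
    rw [slicingConstant]; ring
  have h9 : (1 : ℝ) ≤ 9 ^ n := one_le_pow₀ (by norm_num)
  refine ⟨(shortVectors L (2 * T)).erase 0, fun m hm => ?_, ?_, fun u hu hu1 => ?_⟩
  · obtain ⟨hm0, hmS⟩ := mem_erase.mp hm
    obtain ⟨hmL, hmT⟩ := mem_shortVectors.mp hmS
    refine ⟨hmL, hm0, hmT.trans ?_⟩
    rw [hC]
    calc 2 * T ≤ 2 * B := by linarith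
      _ ≤ 9 ^ n * (n + 1) * B := by gcongr; nlinarith
  · calc (#((shortVectors L (2 * T)).erase 0) : ℝ)
        ≤ #(shortVectors L (2 * T)) := by exact_mod_cast card_erase_le
      _ ≤ 9 ^ n * #(shortVectors L (T / 2)) := by exact_mod_cast card_shortVectors_two_mul_le hT
      _ ≤ 9 ^ n * (n * T + 1) := by gcongr; linarith
      _ ≤ 9 ^ n * ((n + 1) * B) := by gcongr; nlinarith
      _ = 9 ^ n * (n + 1) * B := by ring
      _ = slicingConstant n * (1 + E) := hC.symm
  · obtain ⟨m, hmS, hm0, hum⟩ :=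
      exists_mem_shortVectors_two_mul_dotProduct_eq_zero hu hu1 hT.le hcardT
    exact ⟨m, mem_erase.mpr ⟨hm0, hmS⟩, hum⟩

end Pi

end ZLattice

open Matrix

theorem Matrix.exists_zlattice_mem_iff_covolume_eq {ι : Type*} [Fintype ι] [DecidableEq ι]
    (A : Matrix ι ι ℝ) (hA : A.det ≠ 0) :
    ∃ (L : Submodule ℤ (ι → ℝ)) (_ : DiscreteTopology L) (_ : IsZLattice ℝ L),
      (∀ m, m ∈ L ↔ ∃ v : ι → ℤ, m = A *ᵥ fun i => (v i : ℝ)) ∧ covolume L = |A.det| := by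
  let b := basisOfLinearIndependentOfCardEqFinrank' A.col
    (linearIndependent_cols_of_isUnit ((isUnit_iff_isUnit_det A).mpr hA.isUnit)) (by simp)
  have hb : ⇑b = A.col := coe_basisOfLinearIndependentOfCardEqFinrank' _ _ _
  have hcomb : ∀ v : ι → ℤ, ∑ i, v i • A.col i = A *ᵥ fun i => (v i : ℝ) := fun v => by
    ext i
    simp [mulVec, dotProduct, Finset.sum_apply, mul_comm]
  refine ⟨Submodule.span ℤ (Set.range b), inferInstance, inferInstance, fun m => ?_, ?_⟩
  · simp only [Submodule.mem_span_range_iff_exists_fun, hb, hcomb, eq_comm]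
  · rw [covolume_eq_det _ (b.restrictScalars ℤ)]
    have : Subtype.val ∘ b.restrictScalars ℤ = A.col := funext fun i => by
      simp [Basis.restrictScalars_apply, hb]
    rw [this, ← det_transpose]
    rfl

/-- Siegel's lemma / projective slicing. Let `k ≥ 2` and let `𝖬 ⊂ ℝ^k` be a full-rank lattice,
given as the image of `ℤ^k` under an invertible matrix `A`, so that `det 𝖬 = |det A|`. There
is a constant `C(k)` and a finite set `H ⊂ 𝖬` with `#H ≤ C(k)(1 + det(𝖬)^{1/(k-1)})`, such
that `‖m‖_∞ ≤ C(k)(1 + det(𝖬)^{1/(k-1)})` for every `m ∈ H`, and every `u` in the dual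
lattice `𝖬̂` with `‖u‖_∞ ≤ 1` is orthogonal to some nonzero element of `H`. -/
theorem siegel_projective_slicing (k : ℕ) (hk : 2 ≤ k) :
    ∃ C : ℝ, 0 < C ∧ ∀ A : Matrix (Fin k) (Fin k) ℝ, A.det ≠ 0 →
      ∃ H : Finset (Fin k → ℝ),
        (∀ m ∈ H, ∃ v : Fin k → ℤ, m = A.mulVec fun i => (v i : ℝ)) ∧
        (H.card : ℝ) ≤ C * (1 + |A.det| ^ ((1 : ℝ) / ((k : ℝ) - 1))) ∧
        (∀ m ∈ H, ∀ i, |m i| ≤ C * (1 + |A.det| ^ ((1 : ℝ) / ((k : ℝ) - 1)))) ∧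
        ∀ u : Fin k → ℝ,
          (∀ v : Fin k → ℤ, ∃ z : ℤ, (u ⬝ᵥ A.mulVec fun i => (v i : ℝ)) = (z : ℝ)) →
          (∀ i, |u i| ≤ 1) →
          ∃ m ∈ H, m ≠ 0 ∧ u ⬝ᵥ m = 0 := by
  refine ⟨slicingConstant k, by unfold slicingConstant; positivity, fun A hA => ?_⟩
  obtain ⟨L, _, _, hmem, hcov⟩ := A.exists_zlattice_mem_iff_covolume_eq hA
  obtain ⟨H, hH, hcard, hcover⟩ :=
    ZLattice.exists_finset_forall_dotProduct_eq_zero (L := L) (by simpa using hk)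
  rw [Fintype.card_fin, hcov] at hH hcard
  refine ⟨H, fun m hm => (hmem m).mp (hH m hm).1, hcard,
    fun m hm i => (norm_le_pi_norm m i).trans (hH m hm).2.2, fun u hu hu1 => ?_⟩
  have hdual : ∀ m ∈ L, ∃ z : ℤ, u ⬝ᵥ m = z := fun m hm => by
    obtain ⟨v, rfl⟩ := (hmem m).mp hm
    exact hu v
  obtain ⟨m, hm, hum⟩ := hcover u hdual ((pi_norm_le_iff_of_nonneg zero_le_one).mpr hu1)
  exact ⟨m, hm, (hH m hm).2.1, hum⟩
end

section
/- Let a₁, a₂ be integers, q a squarefree positive integer coprime to a₁a₂, and κ an integer coprime to q. (i) Suppose x₁, x₂, y₁, y₂ are integers coprime to q satisfying x₁y₁ + κx₂y₂ ≡ 0 (mod q) and q³ | a₁x₁²y₁³ + a₂x₂²y₂³. Then: a₂x₁ ≡ κ³a₁x₂ (mod q); κ²a₁y₁ + a₂y₂ ≡ 0 (mod q); κ²a₁x₂y₁ + a₂x₂y₂ ≡ 0 (mod q); 2a₂x₁y₁ + κ³a₁x₂y₁ + 3κa₂x₂y₂ ≡ 0 (mod q²); and 5κ²a₁a₂x₁y₁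 + a₂²x₁y₂ + κ⁵a₁²x₂y₁ + 5κ³a₁a₂x₂y₂ ≡ 0 (mod q³). (ii) Conversely, if integers x₁, x₂, y₁, y₂ satisfy all five of the congruences just listed, and r = gcd(y₁, y₂, q), then q³r² divides 18(a₁x₁²y₁³ + a₂x₂²y₂³). -/
/-!
(i) Each left-hand side, multiplied by a monomial in `x₁, x₂, y₁, y₂` (a unit modulo `q`), is a
combination of `u = x₁y₁ + κx₂y₂` and `S = a₁x₁²y₁³ + a₂x₂²y₂³` whose coefficients carry enough
factors of `q`; for (c4), the congruence (c1) is first lifted to moduli `q²` and `q³`.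

(ii) With `D, E, F, T` the left-hand sides of (c1), (c3), (c4), the identity
`2a₂²S = 2x₂²E³ + 9a₁y₁²DF + 10κa₁x₂y₁EF - 4a₁y₁F² + κa₁x₂y₁²T` gives `q³ ∣ 2S`. For a prime
`p ∣ r` write `y = pY`, so `S = p³S(Y)`; the same identity in `Y` gives `p² ∣ 2S(Y)`, except when
`p ∣ x₂` (then `p ∣ x₁` and `p² ∣ S(Y)` outright) or `p = 3` (absorbed by `18`). Since `q` is
squarefree, these prime-by-prime bounds assemble to `q³r² ∣ 18S`.
-/

section Squarefree

variable {R : Type*} [CommMonoidWithZero R] [UniqueFactorizationMonoid R]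

theorem Squarefree.pow_dvd_of_forall_prime {n m : R} {k : ℕ} (hn : Squarefree n)
    (h : ∀ p, Prime p → p ∣ n → p ^ k ∣ m) : n ^ k ∣ m := by
  nontriviality R
  induction n using UniqueFactorizationMonoid.induction_on_prime with
  | h₁ => exact absurd hn not_squarefree_zero
  | h₂ u hu => exact (hu.pow k).dvd
  | h₃ a p _ hp ih =>
    rw [mul_pow]
    exact (IsRelPrime.of_squarefree_mul hn).pow.mul_dvd (h p hp (dvd_mul_right p a))
      (ih hn.of_mul_right fun p' hp' hdvd => h p' hp' (hdvd.mul_left p))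

theorem Squarefree.pow_mul_pow_dvd {q r m : R} {a b : ℕ} (hq : Squarefree q) (hrq : r ∣ q)
    (hm : q ^ a ∣ m) (hr : ∀ p, Prime p → p ∣ r → p ^ (a + b) ∣ m) : q ^ a * r ^ b ∣ m := by
  obtain ⟨s, rfl⟩ := hrq
  calc (r * s) ^ a * r ^ b = r ^ (a + b) * s ^ a := by rw [mul_pow, pow_add, mul_right_comm]
    _ ∣ m := (IsRelPrime.of_squarefree_mul hq).pow.mul_dvd
        (hq.of_mul_left.pow_dvd_of_forall_prime hr)
        ((pow_dvd_pow_of_dvd (dvd_mul_left s r) a).trans hm)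

end Squarefree

namespace CongruenceLemma

def pairing (κ x₁ x₂ y₁ y₂ : ℤ) : ℤ := x₁ * y₁ + κ * x₂ * y₂

def cubic (a₁ a₂ x₁ x₂ y₁ y₂ : ℤ) : ℤ := a₁ * x₁ ^ 2 * y₁ ^ 3 + a₂ * x₂ ^ 2 * y₂ ^ 3

-- (c1), (c3), (c4) say that `c1x`, `c1y`, `c3`, `c4` vanish modulo `q`, `q`, `q²`, `q³`;
-- (c2) is `x₂ * c1y`.
def c1x (a₁ a₂ κ x₁ x₂ : ℤ) : ℤ := a₂ * x₁ - κ ^ 3 * a₁ * x₂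

def c1y (a₁ a₂ κ y₁ y₂ : ℤ) : ℤ := κ ^ 2 * a₁ * y₁ + a₂ * y₂

def c3 (a₁ a₂ κ x₁ x₂ y₁ y₂ : ℤ) : ℤ :=
  2 * a₂ * x₁ * y₁ + κ ^ 3 * a₁ * x₂ * y₁ + 3 * κ * a₂ * x₂ * y₂

def c4 (a₁ a₂ κ x₁ x₂ y₁ y₂ : ℤ) : ℤ :=
  5 * κ ^ 2 * a₁ * a₂ * x₁ * y₁ + a₂ ^ 2 * x₁ * y₂ +
    κ ^ 5 * a₁ ^ 2 * x₂ * y₁ + 5 * κ ^ 3 * a₁ * a₂ * x₂ * y₂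

variable {a₁ a₂ κ q x₁ x₂ y₁ y₂ : ℤ}

theorem dvd_c1x (hx₁ : IsCoprime x₁ q) (hx₂ : IsCoprime x₂ q) (hy₂ : IsCoprime y₂ q)
    (hu : q ∣ pairing κ x₁ x₂ y₁ y₂) (hS : q ∣ cubic a₁ a₂ x₁ x₂ y₁ y₂) :
    q ∣ c1x a₁ a₂ κ x₁ x₂ := by
  set u := pairing κ x₁ x₂ y₁ y₂ with hu_def
  have key : c1x a₁ a₂ κ x₁ x₂ * (x₁ ^ 2 * x₂ ^ 2 * y₂ ^ 3) = x₁ ^ 3 * cubic a₁ a₂ x₁ x₂ y₁ y₂ -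
      a₁ * x₁ ^ 2 * (u ^ 2 - 3 * κ * x₂ * y₂ * u + 3 * κ ^ 2 * x₂ ^ 2 * y₂ ^ 2) * u := by
    simp only [hu_def, pairing, cubic, c1x]; ring
  have hq : q ∣ c1x a₁ a₂ κ x₁ x₂ * (x₁ ^ 2 * x₂ ^ 2 * y₂ ^ 3) :=
    key ▸ dvd_sub (hS.mul_left _) (hu.mul_left _)
  exact ((hx₁.pow_left.mul_left hx₂.pow_left).mul_left hy₂.pow_left).symm.dvd_of_dvd_mul_right hq

theorem dvd_c1y (hx₁ : IsCoprime x₁ q) (hy₂ : IsCoprime y₂ q)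
    (hu : q ∣ pairing κ x₁ x₂ y₁ y₂) (hD : q ∣ c1x a₁ a₂ κ x₁ x₂) :
    q ∣ c1y a₁ a₂ κ y₁ y₂ := by
  have key : c1y a₁ a₂ κ y₁ y₂ * (x₁ * y₂) =
      κ ^ 2 * a₁ * y₂ * pairing κ x₁ x₂ y₁ y₂ + y₂ ^ 2 * c1x a₁ a₂ κ x₁ x₂ := by
    simp only [pairing, c1x, c1y]; ring
  have hq : q ∣ c1y a₁ a₂ κ y₁ y₂ * (x₁ * y₂) := key ▸ dvd_add (hu.mul_left _) (hD.mul_left _)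
  exact (hx₁.mul_left hy₂).symm.dvd_of_dvd_mul_right hq

theorem sq_dvd_c3 (hx₁ : IsCoprime x₁ q) (hx₂ : IsCoprime x₂ q) (hy₁ : IsCoprime y₁ q)
    (hu : q ∣ pairing κ x₁ x₂ y₁ y₂) (hS : q ^ 2 ∣ cubic a₁ a₂ x₁ x₂ y₁ y₂) :
    q ^ 2 ∣ c3 a₁ a₂ κ x₁ x₂ y₁ y₂ := by
  set u := pairing κ x₁ x₂ y₁ y₂ with hu_def
  have key : c3 a₁ a₂ κ x₁ x₂ y₁ y₂ * (x₁ ^ 2 * x₂ ^ 2 * y₁ ^ 2) =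
      κ ^ 3 * x₂ ^ 3 * cubic a₁ a₂ x₁ x₂ y₁ y₂ + a₂ * x₂ ^ 2 * (3 * x₁ * y₁ - u) * u ^ 2 := by
    simp only [hu_def, pairing, cubic, c3]; ring
  have hq : q ^ 2 ∣ c3 a₁ a₂ κ x₁ x₂ y₁ y₂ * (x₁ ^ 2 * x₂ ^ 2 * y₁ ^ 2) :=
    key ▸ dvd_add (hS.mul_left _) ((pow_dvd_pow_of_dvd hu 2).mul_left _)
  exact ((hx₁.pow_left.mul_left hx₂.pow_left).mul_left hy₁.pow_left).pow_right.symm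
    |>.dvd_of_dvd_mul_right hq

theorem sq_dvd_mul_c1x_add_pairing (hx₁ : IsCoprime x₁ q) (hx₂ : IsCoprime x₂ q)
    (hy₂ : IsCoprime y₂ q) (hu : q ∣ pairing κ x₁ x₂ y₁ y₂)
    (hS : q ^ 2 ∣ cubic a₁ a₂ x₁ x₂ y₁ y₂) :
    q ^ 2 ∣ y₂ * c1x a₁ a₂ κ x₁ x₂ + 3 * κ ^ 2 * a₁ * pairing κ x₁ x₂ y₁ y₂ := by
  set u := pairing κ x₁ x₂ y₁ y₂ with hu_def
  have key : (y₂ * c1x a₁ a₂ κ x₁ x₂ + 3 * κ ^ 2 * a₁ * u) * (x₁ ^ 2 * x₂ ^ 2 * y₂ ^ 2) =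
      x₁ ^ 3 * cubic a₁ a₂ x₁ x₂ y₁ y₂ + a₁ * x₁ ^ 2 * (3 * κ * x₂ * y₂ - u) * u ^ 2 := by
    simp only [hu_def, pairing, cubic, c1x]; ring
  have hq : q ^ 2 ∣ (y₂ * c1x a₁ a₂ κ x₁ x₂ + 3 * κ ^ 2 * a₁ * u) * (x₁ ^ 2 * x₂ ^ 2 * y₂ ^ 2) :=
    key ▸ dvd_add (hS.mul_left _) ((pow_dvd_pow_of_dvd hu 2).mul_left _)
  exact ((hx₁.pow_left.mul_left hx₂.pow_left).mul_left hy₂.pow_left).pow_right.symm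
    |>.dvd_of_dvd_mul_right hq

theorem cube_dvd_mul_c1x_sub_pairing (hx₁ : IsCoprime x₁ q) (hx₂ : IsCoprime x₂ q)
    (hy₁ : IsCoprime y₁ q) (hu : q ∣ pairing κ x₁ x₂ y₁ y₂)
    (hS : q ^ 3 ∣ cubic a₁ a₂ x₁ x₂ y₁ y₂) :
    q ^ 3 ∣ x₁ * y₁ ^ 2 * c1x a₁ a₂ κ x₁ x₂ - 3 * a₂ * x₁ * y₁ * pairing κ x₁ x₂ y₁ y₂ +
      3 * a₂ * pairing κ x₁ x₂ y₁ y₂ ^ 2 := by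
  set u := pairing κ x₁ x₂ y₁ y₂ with hu_def
  have key : (x₁ * y₁ ^ 2 * c1x a₁ a₂ κ x₁ x₂ - 3 * a₂ * x₁ * y₁ * u + 3 * a₂ * u ^ 2) *
      (x₁ * x₂ ^ 2 * y₁) = -κ ^ 3 * x₂ ^ 3 * cubic a₁ a₂ x₁ x₂ y₁ y₂ + a₂ * x₂ ^ 2 * u ^ 3 := by
    simp only [hu_def, pairing, cubic, c1x]; ring
  have hq : q ^ 3 ∣ (x₁ * y₁ ^ 2 * c1x a₁ a₂ κ x₁ x₂ - 3 * a₂ * x₁ * y₁ * u + 3 * a₂ * u ^ 2) *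
      (x₁ * x₂ ^ 2 * y₁) :=
    key ▸ dvd_add (hS.mul_left _) ((pow_dvd_pow_of_dvd hu 3).mul_left _)
  exact ((hx₁.mul_left hx₂.pow_left).mul_left hy₁).pow_right.symm.dvd_of_dvd_mul_right hq

theorem cube_dvd_c4 (hx₁ : IsCoprime x₁ q) (hy₁ : IsCoprime y₁ q) (hy₂ : IsCoprime y₂ q)
    (hu : q ∣ pairing κ x₁ x₂ y₁ y₂) (hF : q ^ 2 ∣ c3 a₁ a₂ κ x₁ x₂ y₁ y₂)
    (hD₂ : q ^ 2 ∣ y₂ * c1x a₁ a₂ κ x₁ x₂ + 3 * κ ^ 2 * a₁ * pairing κ x₁ x₂ y₁ y₂)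
    (hD₃ : q ^ 3 ∣ x₁ * y₁ ^ 2 * c1x a₁ a₂ κ x₁ x₂ - 3 * a₂ * x₁ * y₁ * pairing κ x₁ x₂ y₁ y₂ +
      3 * a₂ * pairing κ x₁ x₂ y₁ y₂ ^ 2) :
    q ^ 3 ∣ c4 a₁ a₂ κ x₁ x₂ y₁ y₂ := by
  set u := pairing κ x₁ x₂ y₁ y₂ with hu_def
  set D := c1x a₁ a₂ κ x₁ x₂ with hD_def
  set F := c3 a₁ a₂ κ x₁ x₂ y₁ y₂ with hF_def
  have key : c4 a₁ a₂ κ x₁ x₂ y₁ y₂ * (x₁ * y₁ * y₂) =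
      -2 * κ ^ 2 * a₁ * y₂ * (x₁ * y₁ ^ 2 * D - 3 * a₂ * x₁ * y₁ * u + 3 * a₂ * u ^ 2) +
      y₂ * ((2 * κ ^ 2 * a₁ * F + 3 * a₂ * (y₂ * D + 3 * κ ^ 2 * a₁ * u)) * u) -
      y₂ * (F * (y₂ * D + 3 * κ ^ 2 * a₁ * u)) := by
    simp only [hu_def, hD_def, hF_def, pairing, c1x, c3, c4]; ring
  have hq : q ^ 3 ∣ c4 a₁ a₂ κ x₁ x₂ y₁ y₂ * (x₁ * y₁ * y₂) := by
    rw [key]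
    refine dvd_sub (dvd_add (hD₃.mul_left _) (Dvd.dvd.mul_left ?_ _)) (Dvd.dvd.mul_left ?_ _)
    · exact pow_succ q 2 ▸ mul_dvd_mul (dvd_add (hF.mul_left _) (hD₂.mul_left _)) hu
    · exact (pow_dvd_pow q (by norm_num)).trans (pow_add q 2 2 ▸ mul_dvd_mul hF hD₂)
  exact ((hx₁.mul_left hy₁).mul_left hy₂).pow_right.symm.dvd_of_dvd_mul_right hq

theorem two_mul_sq_mul_cubic_eq (a₁ a₂ κ x₁ x₂ y₁ y₂ : ℤ) :
    2 * a₂ ^ 2 * cubic a₁ a₂ x₁ x₂ y₁ y₂ =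
      2 * x₂ ^ 2 * c1y a₁ a₂ κ y₁ y₂ ^ 3 +
      9 * a₁ * y₁ ^ 2 * (c1x a₁ a₂ κ x₁ x₂ * c3 a₁ a₂ κ x₁ x₂ y₁ y₂) +
      10 * κ * a₁ * x₂ * y₁ * (c1y a₁ a₂ κ y₁ y₂ * c3 a₁ a₂ κ x₁ x₂ y₁ y₂) -
      4 * a₁ * y₁ * c3 a₁ a₂ κ x₁ x₂ y₁ y₂ ^ 2 +
      κ * a₁ * x₂ * y₁ ^ 2 * c4 a₁ a₂ κ x₁ x₂ y₁ y₂ := by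
  simp only [cubic, c1x, c1y, c3, c4]; ring

theorem cube_dvd_two_mul_cubic (ha₂ : IsCoprime q a₂) (hD : q ∣ c1x a₁ a₂ κ x₁ x₂)
    (hE : q ∣ c1y a₁ a₂ κ y₁ y₂) (hF : q ^ 2 ∣ c3 a₁ a₂ κ x₁ x₂ y₁ y₂)
    (hT : q ^ 3 ∣ c4 a₁ a₂ κ x₁ x₂ y₁ y₂) :
    q ^ 3 ∣ 2 * cubic a₁ a₂ x₁ x₂ y₁ y₂ := by
  have hq : q ^ 3 ∣ a₂ ^ 2 * (2 * cubic a₁ a₂ x₁ x₂ y₁ y₂) := by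
    rw [← mul_assoc, mul_comm (a₂ ^ 2), two_mul_sq_mul_cubic_eq a₁ a₂ κ]
    have hDF := pow_succ' q 2 ▸ mul_dvd_mul hD hF
    have hEF := pow_succ' q 2 ▸ mul_dvd_mul hE hF
    have hFF := (pow_dvd_pow q (by norm_num : 3 ≤ 2 * 2)).trans
      (pow_mul q 2 2 ▸ pow_dvd_pow_of_dvd hF 2)
    exact dvd_add (dvd_sub (dvd_add (dvd_add ((pow_dvd_pow_of_dvd hE 3).mul_left _)
      (hDF.mul_left _)) (hEF.mul_left _)) (hFF.mul_left _)) (hT.mul_left _)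
  exact ha₂.pow.dvd_of_dvd_mul_left hq

theorem sq_dvd_eighteen_mul_cubic {p : ℤ} (hp : Prime p) (ha₂ : ¬p ∣ a₂) (hκ : ¬p ∣ κ)
    (hD : p ∣ c1x a₁ a₂ κ x₁ x₂) (hF : p ∣ c3 a₁ a₂ κ x₁ x₂ y₁ y₂)
    (hT : p ^ 2 ∣ c4 a₁ a₂ κ x₁ x₂ y₁ y₂) :
    p ^ 2 ∣ 18 * cubic a₁ a₂ x₁ x₂ y₁ y₂ := by
  have h18 : 18 * cubic a₁ a₂ x₁ x₂ y₁ y₂ = 9 * (2 * cubic a₁ a₂ x₁ x₂ y₁ y₂) := by ring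
  by_cases hx₂ : p ∣ x₂
  · have hx₁ : p ∣ x₁ := by
      have h : a₂ * x₁ = c1x a₁ a₂ κ x₁ x₂ + κ ^ 3 * a₁ * x₂ := by simp only [c1x]; ring
      exact (hp.dvd_or_dvd (h ▸ dvd_add hD (hx₂.mul_left _))).resolve_left ha₂
    refine Dvd.dvd.mul_left (dvd_add ?_ ?_) 18
    · exact ((pow_dvd_pow_of_dvd hx₁ 2).mul_left a₁).mul_right _
    · exact ((pow_dvd_pow_of_dvd hx₂ 2).mul_left a₂).mul_right _
  by_cases h3 : p ∣ 3
  · exact h18 ▸ (pow_dvd_pow_of_dvd h3 2).mul_right _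
  have hE : p ∣ c1y a₁ a₂ κ y₁ y₂ := by
    have h : 3 * κ * x₂ * c1y a₁ a₂ κ y₁ y₂ =
        c3 a₁ a₂ κ x₁ x₂ y₁ y₂ - 2 * y₁ * c1x a₁ a₂ κ x₁ x₂ := by
      simp only [c1x, c1y, c3]; ring
    refine (hp.dvd_or_dvd (h ▸ dvd_sub hF (hD.mul_left _))).resolve_left ?_
    simp only [hp.dvd_mul]
    tauto
  have hp2 : p ^ 2 ∣ a₂ ^ 2 * (2 * cubic a₁ a₂ x₁ x₂ y₁ y₂) := by
    rw [← mul_assoc, mul_comm (a₂ ^ 2), two_mul_sq_mul_cubic_eq a₁ a₂ κ]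
    have hE3 := (pow_dvd_pow p (by norm_num : 2 ≤ 3)).trans (pow_dvd_pow_of_dvd hE 3)
    have hDF := sq p ▸ mul_dvd_mul hD hF
    have hEF := sq p ▸ mul_dvd_mul hE hF
    exact dvd_add (dvd_sub (dvd_add (dvd_add (hE3.mul_left _) (hDF.mul_left _)) (hEF.mul_left _))
      ((pow_dvd_pow_of_dvd hF 2).mul_left _)) (hT.mul_left _)
  exact h18 ▸ ((hp.coprime_iff_not_dvd.2 ha₂).pow.dvd_of_dvd_mul_left hp2).mul_left 9

theorem pow_five_dvd_eighteen_mul_cubic {p : ℤ} (hp : Prime p) (ha₂ : ¬p ∣ a₂) (hκ : ¬p ∣ κ)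
    (hy₁ : p ∣ y₁) (hy₂ : p ∣ y₂) (hD : p ∣ c1x a₁ a₂ κ x₁ x₂)
    (hF : p ^ 2 ∣ c3 a₁ a₂ κ x₁ x₂ y₁ y₂) (hT : p ^ 3 ∣ c4 a₁ a₂ κ x₁ x₂ y₁ y₂) :
    p ^ 5 ∣ 18 * cubic a₁ a₂ x₁ x₂ y₁ y₂ := by
  obtain ⟨Y₁, rfl⟩ := hy₁
  obtain ⟨Y₂, rfl⟩ := hy₂
  have hp0 := hp.ne_zero
  rw [show c3 a₁ a₂ κ x₁ x₂ (p * Y₁) (p * Y₂) = p * c3 a₁ a₂ κ x₁ x₂ Y₁ Y₂ by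
    simp only [c3]; ring, sq, mul_dvd_mul_iff_left hp0] at hF
  rw [show c4 a₁ a₂ κ x₁ x₂ (p * Y₁) (p * Y₂) = p * c4 a₁ a₂ κ x₁ x₂ Y₁ Y₂ by
    simp only [c4]; ring, pow_succ', mul_dvd_mul_iff_left hp0] at hT
  rw [show 18 * cubic a₁ a₂ x₁ x₂ (p * Y₁) (p * Y₂) = p ^ 3 * (18 * cubic a₁ a₂ x₁ x₂ Y₁ Y₂) by
    simp only [cubic]; ring, show p ^ 5 = p ^ 3 * p ^ 2 by ring,
    mul_dvd_mul_iff_left (pow_ne_zero 3 hp0)]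
  exact sq_dvd_eighteen_mul_cubic hp ha₂ hκ hD hF hT

end CongruenceLemma

open CongruenceLemma in
theorem congruence_lemma_general (a₁ a₂ q κ : ℤ) (hqsf : Squarefree q)
    (hqa : IsCoprime q (a₁ * a₂)) (hκ : IsCoprime κ q) :
    (∀ x₁ x₂ y₁ y₂ : ℤ,
      IsCoprime x₁ q → IsCoprime x₂ q → IsCoprime y₁ q → IsCoprime y₂ q →
      q ∣ x₁ * y₁ + κ * x₂ * y₂ →
      q ^ 3 ∣ a₁ * x₁ ^ 2 * y₁ ^ 3 + a₂ * x₂ ^ 2 * y₂ ^ 3 →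
        (q ∣ a₂ * x₁ - κ ^ 3 * a₁ * x₂) ∧
        (q ∣ κ ^ 2 * a₁ * y₁ + a₂ * y₂) ∧
        (q ∣ κ ^ 2 * a₁ * x₂ * y₁ + a₂ * x₂ * y₂) ∧
        (q ^ 2 ∣ 2 * a₂ * x₁ * y₁ + κ ^ 3 * a₁ * x₂ * y₁ + 3 * κ * a₂ * x₂ * y₂) ∧
        (q ^ 3 ∣ 5 * κ ^ 2 * a₁ * a₂ * x₁ * y₁ + a₂ ^ 2 * x₁ * y₂ +
          κ ^ 5 * a₁ ^ 2 * x₂ * y₁ + 5 * κ ^ 3 * a₁ * a₂ * x₂ * y₂)) ∧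
    (∀ x₁ x₂ y₁ y₂ : ℤ,
      (q ∣ a₂ * x₁ - κ ^ 3 * a₁ * x₂) →
      (q ∣ κ ^ 2 * a₁ * y₁ + a₂ * y₂) →
      (q ∣ κ ^ 2 * a₁ * x₂ * y₁ + a₂ * x₂ * y₂) →
      (q ^ 2 ∣ 2 * a₂ * x₁ * y₁ + κ ^ 3 * a₁ * x₂ * y₁ + 3 * κ * a₂ * x₂ * y₂) →
      (q ^ 3 ∣ 5 * κ ^ 2 * a₁ * a₂ * x₁ * y₁ + a₂ ^ 2 * x₁ * y₂ +
        κ ^ 5 * a₁ ^ 2 * x₂ * y₁ + 5 * κ ^ 3 * a₁ * a₂ * x₂ * y₂) →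
      q ^ 3 * (Int.gcd y₁ (Int.gcd y₂ q) : ℤ) ^ 2 ∣
        18 * (a₁ * x₁ ^ 2 * y₁ ^ 3 + a₂ * x₂ ^ 2 * y₂ ^ 3)) := by
  refine ⟨fun x₁ x₂ y₁ y₂ hx₁ hx₂ hy₁ hy₂ hu hS => ?_, fun x₁ x₂ y₁ y₂ hD hE _ hF hT => ?_⟩
  · have hS₂ : q ^ 2 ∣ cubic a₁ a₂ x₁ x₂ y₁ y₂ := (pow_dvd_pow q (by norm_num)).trans hS
    have hD := dvd_c1x hx₁ hx₂ hy₂ hu ((dvd_pow_self q two_ne_zero).trans hS₂)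
    have hE := dvd_c1y hx₁ hy₂ hu hD
    have hF := sq_dvd_c3 hx₁ hx₂ hy₁ hu hS₂
    refine ⟨hD, hE, (hE.mul_left x₂).trans (dvd_of_eq (by simp only [c1y]; ring)), hF, ?_⟩
    exact cube_dvd_c4 hx₁ hy₁ hy₂ hu hF (sq_dvd_mul_c1x_add_pairing hx₁ hx₂ hy₂ hu hS₂)
      (cube_dvd_mul_c1x_sub_pairing hx₁ hx₂ hy₁ hu hS)
  · have hry₁ : (Int.gcd y₁ (Int.gcd y₂ q) : ℤ) ∣ y₁ := Int.gcd_dvd_left _ _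
    have hry₂ : (Int.gcd y₁ (Int.gcd y₂ q) : ℤ) ∣ y₂ :=
      (Int.gcd_dvd_right _ _).trans (Int.gcd_dvd_left _ _)
    have hrq : (Int.gcd y₁ (Int.gcd y₂ q) : ℤ) ∣ q :=
      (Int.gcd_dvd_right _ _).trans (Int.gcd_dvd_right _ _)
    refine hqsf.pow_mul_pow_dvd hrq ?_ fun p hp hpr => ?_
    · exact (cube_dvd_two_mul_cubic hqa.of_mul_right_right hD hE hF hT).trans
        ⟨9, by simp only [cubic]; ring⟩
    have hpq := hpr.trans hrq
    have ha₂ : ¬p ∣ a₂ := fun h => hp.not_isUnit (hqa.isUnit_of_dvd' hpq (h.mul_left a₁))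
    have hκp : ¬p ∣ κ := fun h => hp.not_isUnit (hκ.isUnit_of_dvd' h hpq)
    exact pow_five_dvd_eighteen_mul_cubic hp ha₂ hκp (hpr.trans hry₁) (hpr.trans hry₂)
      (hpq.trans hD) ((pow_dvd_pow_of_dvd hpq 2).trans hF) ((pow_dvd_pow_of_dvd hpq 3).trans hT)

/-- Let `a₁, a₂` be integers, `q` a squarefree positive integer coprime to `a₁a₂`, and `κ` an
integer coprime to `q`.
(i) If `x₁, x₂, y₁, y₂` are integers coprime to `q` with `x₁y₁ + κx₂y₂ ≡ 0 (mod q)` and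
`q³ ∣ a₁x₁²y₁³ + a₂x₂²y₂³`, then the five congruences (c1)–(c4) hold:
`a₂x₁ ≡ κ³a₁x₂ (mod q)`; `κ²a₁y₁ + a₂y₂ ≡ 0 (mod q)`;
`κ²a₁x₂y₁ + a₂x₂y₂ ≡ 0 (mod q)`; `2a₂x₁y₁ + κ³a₁x₂y₁ + 3κa₂x₂y₂ ≡ 0 (mod q²)`;
`5κ²a₁a₂x₁y₁ + a₂²x₁y₂ + κ⁵a₁²x₂y₁ + 5κ³a₁a₂x₂y₂ ≡ 0 (mod q³)`.
(ii) Conversely, if `x₁, x₂, y₁, y₂` satisfy all five of these congruences and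
`r = gcd(y₁, y₂, q)`, then `q³r² ∣ 18(a₁x₁²y₁³ + a₂x₂²y₂³)`. -/
theorem congruence_lemma (a₁ a₂ q κ : ℤ) (hq : 0 < q) (hqsf : Squarefree q)
    (hqa : IsCoprime q (a₁ * a₂)) (hκ : IsCoprime κ q) :
    (∀ x₁ x₂ y₁ y₂ : ℤ,
      IsCoprime x₁ q → IsCoprime x₂ q → IsCoprime y₁ q → IsCoprime y₂ q →
      q ∣ x₁ * y₁ + κ * x₂ * y₂ →
      q ^ 3 ∣ a₁ * x₁ ^ 2 * y₁ ^ 3 + a₂ * x₂ ^ 2 * y₂ ^ 3 →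
        (q ∣ a₂ * x₁ - κ ^ 3 * a₁ * x₂) ∧
        (q ∣ κ ^ 2 * a₁ * y₁ + a₂ * y₂) ∧
        (q ∣ κ ^ 2 * a₁ * x₂ * y₁ + a₂ * x₂ * y₂) ∧
        (q ^ 2 ∣ 2 * a₂ * x₁ * y₁ + κ ^ 3 * a₁ * x₂ * y₁ + 3 * κ * a₂ * x₂ * y₂) ∧
        (q ^ 3 ∣ 5 * κ ^ 2 * a₁ * a₂ * x₁ * y₁ + a₂ ^ 2 * x₁ * y₂ +
          κ ^ 5 * a₁ ^ 2 * x₂ * y₁ + 5 * κ ^ 3 * a₁ * a₂ * x₂ * y₂)) ∧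
    (∀ x₁ x₂ y₁ y₂ : ℤ,
      (q ∣ a₂ * x₁ - κ ^ 3 * a₁ * x₂) →
      (q ∣ κ ^ 2 * a₁ * y₁ + a₂ * y₂) →
      (q ∣ κ ^ 2 * a₁ * x₂ * y₁ + a₂ * x₂ * y₂) →
      (q ^ 2 ∣ 2 * a₂ * x₁ * y₁ + κ ^ 3 * a₁ * x₂ * y₁ + 3 * κ * a₂ * x₂ * y₂) →
      (q ^ 3 ∣ 5 * κ ^ 2 * a₁ * a₂ * x₁ * y₁ + a₂ ^ 2 * x₁ * y₂ +
        κ ^ 5 * a₁ ^ 2 * x₂ * y₁ + 5 * κ ^ 3 * a₁ * a₂ * x₂ * y₂) →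
      q ^ 3 * (Int.gcd y₁ (Int.gcd y₂ q) : ℤ) ^ 2 ∣
        18 * (a₁ * x₁ ^ 2 * y₁ ^ 3 + a₂ * x₂ ^ 2 * y₂ ^ 3)) :=
  congruence_lemma_general a₁ a₂ q κ hqsf hqa hκ
end
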